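/- As α → ∞, sup_{x ∈ [0,∞)} |H(α,x)| = (C(α)/(1+2α))·(1 + o(1)); that is, lim_{α→∞} ( sup_{x ∈ [0,∞)} |H(α,x)| ) · (1+2α) / C(α) = 1, where C(α) = ∫₀^∞ t^α / sinh t dt and H(α,x) = ∫₀^∞ (t^α / sinh t) · (x · sin x)/(x² + t²) dt. -/

import Mathlib

/-!
Since `1 / sinh t = 2 e^{-t} + e^{-2t} / sinh t` and `t ≤ sinh t`, the weight `t^α / sinh t` lies
between `2 t^α e^{-t}` and `2 t^α e^{-t} + t^{α-1} e^{-2t}`; hence `C(α) ~ 2 Γ(α+1)`, so that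
`C(α-1) / C(α) ~ 1/α` and `C(α+2) / C(α) ~ α²`.

From above, `|x sin x| / (x² + t²) ≤ 1 / (2t)` gives `|H(α,x)| ≤ C(α-1) / 2`. From below, at a point
`x ∈ [α, α + 2π)` with `sin x = 1`, Cauchy–Schwarz `(∫ w)² ≤ ∫ w (x² + t²) · ∫ w / (x² + t²)` for
`w = t^α / sinh t` gives `H(α,x) ≥ x C(α)² / (x² C(α) + C(α+2))`. Both bounds are
`C(α) / (2α) · (1 + o(1))`.
-/

open MeasureTheory Filter Real

/-- `C(α) = ∫₀^∞ t^α / sinh t dt`. -/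
noncomputable def Cconst (α : ℝ) : ℝ :=
  ∫ t in Set.Ioi (0:ℝ), t ^ α / Real.sinh t

/-- `H(α,x) = ∫₀^∞ (t^α / sinh t) · (x·sin x)/(x²+t²) dt`. -/
noncomputable def Hfun (α x : ℝ) : ℝ :=
  ∫ t in Set.Ioi (0:ℝ), t ^ α / Real.sinh t * (x * Real.sin x / (x ^ 2 + t ^ 2))

open Set Topology

lemma integrableOn_rpow_mul_exp_neg_mul {s b : ℝ} (hs : -1 < s) (hb : 0 < b) :
    IntegrableOn (fun t : ℝ => t ^ s * exp (-(b * t))) (Ioi 0) := by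
  simpa [rpow_one] using integrableOn_rpow_mul_exp_neg_mul_rpow hs one_pos hb

lemma integral_rpow_mul_exp_neg_mul {s b : ℝ} (hs : -1 < s) (hb : 0 < b) :
    ∫ t in Ioi (0:ℝ), t ^ s * exp (-(b * t)) = (1 / b) ^ (s + 1) * Gamma (s + 1) := by
  simpa using integral_rpow_mul_exp_neg_mul_Ioi (a := s + 1) (by linarith) hb

lemma inv_sinh_eq {t : ℝ} (ht : t ≠ 0) :
    (sinh t)⁻¹ = 2 * exp (-t) + exp (-(2 * t)) / sinh t := by
  have hs : sinh t ≠ 0 := sinh_ne_zero.2 ht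
  field_simp
  rw [sinh_eq, show -(2 * t) = -t + -t by ring, exp_add, exp_neg]
  field_simp
  ring

lemma two_mul_rpow_mul_exp_neg_le_rpow_div_sinh (a : ℝ) {t : ℝ} (ht : 0 < t) :
    2 * (t ^ a * exp (-(1 * t))) ≤ t ^ a / sinh t := by
  have : 0 ≤ t ^ a * (exp (-(2 * t)) / sinh t) := by
    have := sinh_pos_iff.2 ht
    positivity
  rw [div_eq_mul_inv, inv_sinh_eq ht.ne', one_mul, mul_add]
  linarith

lemma rpow_div_sinh_le {a t : ℝ} (ht : 0 < t) :
    t ^ a / sinh t ≤ 2 * (t ^ a * exp (-(1 * t))) + t ^ (a - 1) * exp (-(2 * t)) := by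
  have hsinh : t ≤ sinh t := self_le_sinh_iff.2 ht.le
  have hdiv : exp (-(2 * t)) / sinh t ≤ exp (-(2 * t)) / t :=
    div_le_div_of_nonneg_left (exp_pos _).le ht hsinh
  have hpow : t ^ (a - 1) = t ^ a / t := by rw [rpow_sub ht, rpow_one]
  rw [div_eq_mul_inv, inv_sinh_eq ht.ne', one_mul, hpow]
  calc t ^ a * (2 * exp (-t) + exp (-(2 * t)) / sinh t)
      ≤ t ^ a * (2 * exp (-t) + exp (-(2 * t)) / t) := by
        gcongr
    _ = _ := by ring

lemma integrableOn_rpow_div_sinh {a : ℝ} (ha : 0 < a) :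
    IntegrableOn (fun t : ℝ => t ^ a / sinh t) (Ioi 0) := by
  have h₁ := (integrableOn_rpow_mul_exp_neg_mul (s := a) (by linarith) one_pos).const_mul 2
  have h₂ := integrableOn_rpow_mul_exp_neg_mul (s := a - 1) (by linarith) two_pos
  refine (h₁.add h₂).mono'
    (by fun_prop : Measurable fun t : ℝ => t ^ a / sinh t).aestronglyMeasurable ?_
  filter_upwards [ae_restrict_mem measurableSet_Ioi] with t (ht : 0 < t)
  rw [norm_of_nonneg (div_nonneg (rpow_nonneg ht.le a) (sinh_pos_iff.2 ht).le)]
  exact rpow_div_sinh_le ht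

lemma two_mul_Gamma_le_Cconst {a : ℝ} (ha : 0 < a) : 2 * Gamma (a + 1) ≤ Cconst a := by
  have h := setIntegral_mono_on
    ((integrableOn_rpow_mul_exp_neg_mul (by linarith) one_pos).const_mul 2)
    (integrableOn_rpow_div_sinh ha) measurableSet_Ioi
    fun t ht => two_mul_rpow_mul_exp_neg_le_rpow_div_sinh a ht
  rwa [integral_const_mul, integral_rpow_mul_exp_neg_mul (by linarith) one_pos, div_one,
    one_rpow, one_mul] at h

lemma Cconst_le {a : ℝ} (ha : 0 < a) :
    Cconst a ≤ 2 * Gamma (a + 1) + (1 / 2) ^ a * Gamma a := by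
  have h₁ := (integrableOn_rpow_mul_exp_neg_mul (s := a) (by linarith) one_pos).const_mul 2
  have h₂ := integrableOn_rpow_mul_exp_neg_mul (s := a - 1) (by linarith) two_pos
  have h := setIntegral_mono_on (integrableOn_rpow_div_sinh ha) (h₁.add h₂) measurableSet_Ioi
    fun t ht => rpow_div_sinh_le ht
  simp only [Pi.add_apply] at h
  rwa [integral_add h₁ h₂, integral_const_mul,
    integral_rpow_mul_exp_neg_mul (by linarith) one_pos,
    integral_rpow_mul_exp_neg_mul (by linarith) two_pos, div_one, one_rpow, one_mul,
    sub_add_cancel] at h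

lemma tendsto_one_add_div_atTop (c : ℝ) : Tendsto (fun a : ℝ => 1 + c / a) atTop (𝓝 1) := by
  simpa using tendsto_const_nhds.add (tendsto_id.const_div_atTop c)

lemma Cconst_pos {a : ℝ} (ha : 0 < a) : 0 < Cconst a :=
  (mul_pos two_pos (Gamma_pos_of_pos (by linarith))).trans_le (two_mul_Gamma_le_Cconst ha)

lemma tendsto_Cconst_div_Gamma :
    Tendsto (fun a : ℝ => Cconst a / (2 * Gamma (a + 1))) atTop (𝓝 1) := by
  refine tendsto_of_tendsto_of_tendsto_of_le_of_le' tendsto_const_nhds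
    (tendsto_one_add_div_atTop (1 / 2)) ?_ ?_
  all_goals filter_upwards [eventually_gt_atTop 0] with a ha
  · rw [le_div_iff₀ (by positivity), one_mul]
    exact two_mul_Gamma_le_Cconst ha
  · have hΓ : Gamma (a + 1) = a * Gamma a := Gamma_add_one ha.ne'
    have hpow : (1 / 2 : ℝ) ^ a ≤ 1 := rpow_le_one (by norm_num) (by norm_num) ha.le
    have hΓa := Gamma_pos_of_pos ha
    rw [div_le_iff₀ (by positivity)]
    calc Cconst a ≤ 2 * Gamma (a + 1) + (1 / 2) ^ a * Gamma a := Cconst_le ha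
      _ ≤ 2 * Gamma (a + 1) + Gamma a := by gcongr; exact mul_le_of_le_one_left hΓa.le hpow
      _ = (1 + 1 / 2 / a) * (2 * Gamma (a + 1)) := by rw [hΓ]; field_simp

lemma tendsto_Cconst_sub_one_mul_div_Cconst :
    Tendsto (fun a : ℝ => Cconst (a - 1) / 2 * (1 + 2 * a) / Cconst a) atTop (𝓝 1) := by
  have hK := tendsto_Cconst_div_Gamma
  have hK' : Tendsto (fun a : ℝ => Cconst (a - 1) / (2 * Gamma (a - 1 + 1))) atTop (𝓝 1) :=
    hK.comp (tendsto_atTop_add_const_right _ (-1) tendsto_id)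
  have h := (hK'.div hK one_ne_zero).mul (tendsto_one_add_div_atTop (1 / 2))
  rw [div_one, one_mul] at h
  refine h.congr' ?_
  filter_upwards [eventually_gt_atTop 1] with a ha
  have hΓ : Gamma (a + 1) = a * Gamma a := Gamma_add_one (by linarith)
  have := Gamma_pos_of_pos (show 0 < a by linarith)
  have := Cconst_pos (show 0 < a by linarith)
  rw [Pi.div_apply, sub_add_cancel, hΓ]
  field_simp
  ring

lemma tendsto_Cconst_add_two_div_Cconst :
    Tendsto (fun a : ℝ => Cconst (a + 2) / (a ^ 2 * Cconst a)) atTop (𝓝 1) := by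
  have hK := tendsto_Cconst_div_Gamma
  have hK' : Tendsto (fun a : ℝ => Cconst (a + 2) / (2 * Gamma (a + 2 + 1))) atTop (𝓝 1) :=
    hK.comp (tendsto_atTop_add_const_right _ 2 tendsto_id)
  have h := ((hK'.div hK one_ne_zero).mul (tendsto_one_add_div_atTop 2)).mul
    (tendsto_one_add_div_atTop 1)
  rw [div_one, one_mul, one_mul] at h
  refine h.congr' ?_
  filter_upwards [eventually_gt_atTop 0] with a ha
  have hΓ : Gamma (a + 2 + 1) = (a + 2) * ((a + 1) * Gamma (a + 1)) := by
    rw [Gamma_add_one (by linarith), show a + 2 = a + 1 + 1 by ring, Gamma_add_one (by linarith)]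
  have := Gamma_pos_of_pos (show 0 < a + 1 by linarith)
  have := Cconst_pos ha
  rw [Pi.div_apply, hΓ]
  field_simp

lemma sq_integral_div_integral_mul_le {X : Type*} [MeasurableSpace X] {μ : Measure X}
    {w u : X → ℝ} (hw : ∀ᵐ x ∂μ, 0 ≤ w x) (hu : ∀ᵐ x ∂μ, 0 < u x) (hw_int : Integrable w μ)
    (hwu_int : Integrable (fun x => w x * u x) μ) (hwu_pos : 0 < ∫ x, w x * u x ∂μ)
    (hw_div_u : Integrable (fun x => w x / u x) μ) :
    (∫ x, w x ∂μ) ^ 2 / ∫ x, w x * u x ∂μ ≤ ∫ x, w x / u x ∂μ := by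
  set m := (∫ x, w x ∂μ) / ∫ x, w x * u x ∂μ with hm
  -- the tangent line `2 m - m² u` of `u ↦ 1 / u` at `u = 1 / m`
  have htangent : ∀ᵐ x ∂μ, 2 * m * w x - m ^ 2 * (w x * u x) ≤ w x / u x := by
    filter_upwards [hw, hu] with x hwx hux
    rw [le_div_iff₀ hux]
    nlinarith [mul_nonneg hwx (sq_nonneg (1 - m * u x))]
  have h := integral_mono_ae ((hw_int.const_mul _).sub (hwu_int.const_mul _)) hw_div_u htangent
  simp only [Pi.sub_apply] at h
  rw [integral_sub (hw_int.const_mul _) (hwu_int.const_mul _), integral_const_mul,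
    integral_const_mul] at h
  refine le_of_eq_of_le ?_ h
  rw [hm]
  field_simp
  ring

lemma abs_rpow_div_sinh_mul_le {α x t : ℝ} (ht : 0 < t) :
    |t ^ α / sinh t * (x * sin x / (x ^ 2 + t ^ 2))| ≤ t ^ (α - 1) / sinh t / 2 := by
  have hw : 0 ≤ t ^ α / sinh t := div_nonneg (rpow_nonneg ht.le α) (sinh_pos_iff.2 ht).le
  have hden : 0 < x ^ 2 + t ^ 2 := by positivity
  have hfrac : |x * sin x / (x ^ 2 + t ^ 2)| ≤ 1 / (2 * t) := by
    rw [abs_div, abs_of_pos hden, abs_mul, div_le_div_iff₀ hden (by positivity)]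
    have := mul_le_of_le_one_right (abs_nonneg x) (abs_sin_le_one x)
    nlinarith [sq_abs x, sq_nonneg (|x| - t)]
  rw [abs_mul, abs_of_nonneg hw, rpow_sub ht, rpow_one]
  calc t ^ α / sinh t * |x * sin x / (x ^ 2 + t ^ 2)| ≤ t ^ α / sinh t * (1 / (2 * t)) := by
        gcongr
    _ = t ^ α / t / sinh t / 2 := by field_simp

lemma abs_Hfun_le {α : ℝ} (hα : 1 < α) (x : ℝ) : |Hfun α x| ≤ Cconst (α - 1) / 2 := by
  rw [Cconst, ← integral_div, ← norm_eq_abs]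
  refine norm_integral_le_of_norm_le ((integrableOn_rpow_div_sinh (by linarith)).div_const 2) ?_
  filter_upwards [ae_restrict_mem measurableSet_Ioi] with t (ht : 0 < t)
  exact abs_rpow_div_sinh_mul_le ht

lemma le_Hfun_of_sin_eq_one {α x : ℝ} (hα : 0 < α) (hx : 0 < x) (hsin : sin x = 1) :
    x * Cconst α ^ 2 / (x ^ 2 * Cconst α + Cconst (α + 2)) ≤ Hfun α x := by
  have hw := integrableOn_rpow_div_sinh hα
  have hw₂ := integrableOn_rpow_div_sinh (show 0 < α + 2 by linarith)
  have hpos : ∀ᵐ t ∂volume.restrict (Ioi (0:ℝ)), 0 < t := ae_restrict_mem measurableSet_Ioi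
  have hsplit : EqOn (fun t => t ^ α / sinh t * (x ^ 2 + t ^ 2))
      (fun t => x ^ 2 * (t ^ α / sinh t) + t ^ (α + 2) / sinh t) (Ioi 0) := by
    intro t (ht : 0 < t)
    simp only [rpow_add ht, rpow_two]
    ring
  have hmoment : ∫ t in Ioi (0:ℝ), t ^ α / sinh t * (x ^ 2 + t ^ 2)
      = x ^ 2 * Cconst α + Cconst (α + 2) := by
    rw [setIntegral_congr_fun measurableSet_Ioi hsplit, integral_add (hw.const_mul _) hw₂,
      integral_const_mul, Cconst, Cconst]
  have hdiv : IntegrableOn (fun t => t ^ α / sinh t / (x ^ 2 + t ^ 2)) (Ioi 0) := by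
    refine (hw.div_const (x ^ 2)).mono' (by fun_prop : Measurable fun t : ℝ =>
      t ^ α / sinh t / (x ^ 2 + t ^ 2)).aestronglyMeasurable ?_
    filter_upwards [hpos] with t ht
    have : 0 ≤ t ^ α / sinh t := div_nonneg (rpow_nonneg ht.le α) (sinh_pos_iff.2 ht).le
    rw [norm_of_nonneg (by positivity)]
    gcongr
    nlinarith
  have hH : Hfun α x = x * ∫ t in Ioi (0:ℝ), t ^ α / sinh t / (x ^ 2 + t ^ 2) := by
    rw [Hfun, ← integral_const_mul, hsin]
    congr 1 with t
    ring
  have hCS := sq_integral_div_integral_mul_le (u := fun t => x ^ 2 + t ^ 2)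
    (hpos.mono fun t ht => div_nonneg (rpow_nonneg ht.le α) (sinh_pos_iff.2 ht).le)
    (hpos.mono fun t ht => by positivity) hw
    (IntegrableOn.congr_fun ((hw.const_mul _).add hw₂) hsplit.symm measurableSet_Ioi)
    (hmoment ▸ add_pos (mul_pos (pow_pos hx 2) (Cconst_pos hα)) (Cconst_pos (by linarith))) hdiv
  rw [hmoment, ← Cconst] at hCS
  rw [hH, mul_div_assoc]
  exact mul_le_mul_of_nonneg_left hCS hx.le

noncomputable def sinPeak (a : ℝ) : ℝ := toIcoMod two_pi_pos a (π / 2)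

lemma sin_sinPeak (a : ℝ) : sin (sinPeak a) = 1 := by
  rw [sinPeak, ← self_sub_toIcoDiv_zsmul, zsmul_eq_mul, sin_sub_int_mul_two_pi, sin_pi_div_two]

lemma sinPeak_mem_Ico (a : ℝ) : sinPeak a ∈ Ico a (a + 2 * π) := toIcoMod_mem_Ico _ _ _

lemma tendsto_sinPeak_div : Tendsto (fun a => sinPeak a / a) atTop (𝓝 1) := by
  refine tendsto_of_tendsto_of_tendsto_of_le_of_le' tendsto_const_nhds
    (tendsto_one_add_div_atTop (2 * π)) ?_ ?_
  all_goals filter_upwards [eventually_gt_atTop 0] with a ha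
  · rw [le_div_iff₀ ha, one_mul]
    exact (sinPeak_mem_Ico a).1
  · rw [div_le_iff₀ ha, add_mul, one_mul, div_mul_cancel₀ _ ha.ne']
    exact (sinPeak_mem_Ico a).2.le

lemma tendsto_sinPeak_lower_bound_mul_div_Cconst :
    Tendsto (fun α => sinPeak α * Cconst α ^ 2 / (sinPeak α ^ 2 * Cconst α + Cconst (α + 2))
      * (1 + 2 * α) / Cconst α) atTop (𝓝 1) := by
  have hx := tendsto_sinPeak_div
  have h := (hx.mul (tendsto_const_nhds (x := (2:ℝ)).add (tendsto_id.const_div_atTop 1))).div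
    ((hx.pow 2).add tendsto_Cconst_add_two_div_Cconst) (by norm_num)
  rw [show (1:ℝ) * (2 + 0) / (1 ^ 2 + 1) = 1 by norm_num] at h
  refine h.congr' ?_
  filter_upwards [eventually_gt_atTop 0] with a ha
  have := Cconst_pos ha
  have := Cconst_pos (show 0 < a + 2 by linarith)
  have := (sinPeak_mem_Ico a).1
  rw [Pi.div_apply, id]
  field_simp
  ring

theorem stmt_6 :
    Tendsto
      (fun α : ℝ => (⨆ x : Set.Ici (0:ℝ), |Hfun α (x : ℝ)|) * (1 + 2 * α) / Cconst α)
      atTop (nhds 1) := by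
  refine tendsto_of_tendsto_of_tendsto_of_le_of_le' tendsto_sinPeak_lower_bound_mul_div_Cconst
    tendsto_Cconst_sub_one_mul_div_Cconst ?_ ?_
  all_goals filter_upwards [eventually_gt_atTop 1] with α hα
  all_goals have hC := Cconst_pos (show 0 < α by linarith)
  all_goals gcongr
  · have hbdd : BddAbove (range fun x : Ici (0:ℝ) => |Hfun α x|) :=
      ⟨_, forall_mem_range.2 fun x => abs_Hfun_le hα x⟩
    have hx : 0 < sinPeak α := by linarith [(sinPeak_mem_Ico α).1]
    calc _ ≤ Hfun α (sinPeak α) := le_Hfun_of_sin_eq_one (by linarith) hx (sin_sinPeak α)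
      _ ≤ |Hfun α (sinPeak α)| := le_abs_self _
      _ ≤ _ := le_ciSup hbdd ⟨sinPeak α, hx.le⟩
  · exact ciSup_le fun x => abs_Hfun_le hα x
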